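/- Transition probability with no prior change: for the stationary simple random walk on G_K started at a with N blocks of lengths M_1,...,M_N, and for 2 ≤ n ≤ N, P(ε_n = 1 | ε_{n-1} = 0, ..., ε_1 = 0, Y(0) = a) = M_n/(M_n + 1 + x_{n+1}^N), with convention x_{N+1}^N = 1 (so for n = N this equals M_N/(M_N+2)). -/

import Mathlib

open MeasureTheory ProbabilityTheory Finset

noncomputable section

/-- The sample space of the coupled construction: `ε`, `(α_k)`, `(β_k)`. -/
abbrev Omega (K : ℕ) := Bool × (Fin K → Fin 3) × (Fin K → Bool)

/-- The uniform probability measure on `Omega K`; its coordinates are independent,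
`ε` is uniform on `{-1,1}` (via `Bool`), each `α_k` is Bernoulli(1/3)
(`α_k = 1` iff the `Fin 3` coordinate equals `0`), each `β_k` uniform on `{-1,1}`. -/
def unif (K : ℕ) : Measure (Omega K) := (PMF.uniformOfFintype (Omega K)).toMeasure

def sgn (b : Bool) : ℤ := if b then 1 else -1

def epsRV {K : ℕ} (ω : Omega K) : ℤ := sgn ω.1

def alphaRV {K : ℕ} (k : Fin K) (ω : Omega K) : ℤ := if ω.2.1 k = 0 then 1 else 0

def alphaN {K : ℕ} (k : Fin K) (ω : Omega K) : ℕ := if ω.2.1 k = 0 then 1 else 0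

def betaRV {K : ℕ} (k : Fin K) (ω : Omega K) : ℤ := sgn (ω.2.2 k)

/-- `γ_{j+1} = ε · (-1)^{α_1 + ⋯ + α_j}` (0-indexed: `gammaRV j` is the paper's `γ_{j+1}`). -/
def gammaRV {K : ℕ} (j : ℕ) (ω : Omega K) : ℤ :=
  epsRV ω * (-1) ^ (∑ k ∈ Finset.univ.filter (fun k : Fin K => (k : ℕ) < j), alphaN k ω)

/-- `A_k = (1-α_k)β_k + α_k γ_k`. -/
def ARV {K : ℕ} (k : Fin K) (ω : Omega K) : ℤ :=
  (1 - alphaRV k ω) * betaRV k ω + alphaRV k ω * gammaRV (k : ℕ) ω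

/-- `B_k = (1-α_k)β_k - α_k γ_k`. -/
def BRV {K : ℕ} (k : Fin K) (ω : Omega K) : ℤ :=
  (1 - alphaRV k ω) * betaRV k ω - alphaRV k ω * gammaRV (k : ℕ) ω

/-- The nonzero coordinates of `v - u` have alternating signs: whenever `i < j` are
two "changed" coordinates with no changed coordinate strictly between them,
the changes have opposite signs. -/
def AltSigns {K : ℕ} (u v : Fin K → ℤ) : Prop :=
  ∀ i j : Fin K, i < j → u i ≠ v i → u j ≠ v j →
    (∀ l : Fin K, i < l → l < j → u l = v l) → v i - u i = -(v j - u j)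

/-- The first nonzero coordinate of `v - u` is negative if `s = true` (positive edges `E⁺`),
positive if `s = false` (negative edges `E⁻`). -/
def FirstSign {K : ℕ} (s : Bool) (u v : Fin K → ℤ) : Prop :=
  ∀ i : Fin K, u i ≠ v i → (∀ l : Fin K, l < i → u l = v l) →
    (if s then v i - u i < 0 else 0 < v i - u i)

/-- `(u,v)` is an edge of sign `s` of the multigraph `G_K`: either a loop (each vertex
carries one loop of each sign), or `u ≠ v` with alternating signs starting as dictated by `s`. -/
def IsEdge {K : ℕ} (s : Bool) (u v : Fin K → ℤ) : Prop :=
  u = v ∨ (u ≠ v ∧ AltSigns u v ∧ FirstSign s u v)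

/-- Interpret a Boolean vector as a vertex of `V_K = {-1,1}^K`. -/
def toPM {K : ℕ} (b : Fin K → Bool) : Fin K → ℤ := fun k => if b k then 1 else -1

/-- Partial sums `S_m = M_1 + ⋯ + M_m` of the block lengths. -/
def Ssum (M : ℕ → ℕ) (m : ℕ) : ℕ := ∑ k ∈ Finset.range m, M k

/-- 0-indexed block index of position `k` (positions `Ssum M j ≤ k < Ssum M (j+1)`
belong to block `j`). -/
def blk (M : ℕ → ℕ) (N : ℕ) (k : ℕ) : ℕ :=
  ((Finset.range N).filter (fun m => Ssum M (m + 1) ≤ k)).card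

/-- The vertex `a ∈ {-1,1}^K` whose maximal constancy blocks have lengths
`M_1, …, M_N` and whose first digit is `1` (so block `j` carries the value `(-1)^j`,
0-indexed). -/
def avert (M : ℕ → ℕ) (N : ℕ) {K : ℕ} : Fin K → ℤ :=
  fun k => if blk M N (k : ℕ) % 2 = 0 then 1 else -1

/-- Finite continued fraction: `cf [a₁, …, aₙ] = 1/(a₁ + 1/(a₂ + ⋯ + 1/(aₙ + 1)))`,
with `cf [] = 1`. -/
noncomputable def cf : List ℝ → ℝ
  | [] => 1
  | a :: l => 1 / (a + cf l)

/-- `x_j^N = [M_j; M_{j+1}, …, M_{N-1}, 1]` (0-indexed blocks `j, …, N-1`);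
for `j = N` this is the convention `x_{N+1}^N = 1`. -/
noncomputable def xcf (M : ℕ → ℕ) (N j : ℕ) : ℝ :=
  cf ((List.range (N - j)).map fun i => (M (j + i) : ℝ))

/-- `ε_j = 1`: the step of the walk changes a digit in the `j`-th (0-indexed)
constancy block, i.e. `B` differs from `A` at some position of block `j`. -/
def epsChange {K : ℕ} (M : ℕ → ℕ) (N : ℕ) (j : ℕ) (ω : Omega K) : Prop :=
  ∃ k : Fin K, blk M N (k : ℕ) = j ∧ BRV k ω ≠ ARV k ω

/-! Write `T = {k | α_k = 1}`. Then `B_k ≠ A_k` exactly for `k ∈ T`, and `A = a` says that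
`β = a` off `T` while `a` alternates along `T` starting with `ε`; so every admissible pair
`(ε, T)` carries `2^(K - |T|) · 2^|T| = 2^K` outcomes, and "no change before block `j`" says
that `T` lies in the blocks `≥ j`. Counting the alternating subsets of the blocks `≥ b` of the
block vertex gives the continuant recursion `G_b = M_b G_{b+1} + G_{b+2}`, so the conditioning
event has `(G_j + G_{j+1}) 2^K` outcomes, of which `(G_{j+1} + G_{j+2}) 2^K` have no change in
block `j` either. Finally `x_{j+1}^N = G_{j+2} / G_{j+1}`. -/

open scoped Classical

lemma cond_uniformOfFintype_toMeasure {α : Type*} [Fintype α] [Nonempty α] [DecidableEq α]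
    [MeasurableSpace α] [MeasurableSingletonClass α] (s t : Finset α) :
    ProbabilityTheory.cond (PMF.uniformOfFintype α).toMeasure s t = #(s ∩ t) / #s := by
  rw [cond_apply s.measurableSet, ← coe_inter,
    PMF.toMeasure_uniformOfFintype_apply _ s.measurableSet,
    PMF.toMeasure_uniformOfFintype_apply _ (s ∩ t).measurableSet]
  simp only [coe_sort_coe, Fintype.card_coe]
  rw [ENNReal.inv_div (Or.inl (ENNReal.natCast_ne_top _)) (Or.inl (by simp)),
    mul_comm, ← mul_div_assoc, ENNReal.div_mul_cancel (by simp) (ENNReal.natCast_ne_top _)]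

section Continuant

def continuant (M : ℕ → ℕ) (N b : ℕ) : ℕ :=
  if b < N then M b * continuant M N (b + 1) + continuant M N (b + 2) else 1
termination_by N - b

variable {M : ℕ → ℕ} {N : ℕ}

lemma continuant_of_lt {b : ℕ} (h : b < N) :
    continuant M N b = M b * continuant M N (b + 1) + continuant M N (b + 2) := by
  rw [continuant, if_pos h]

lemma continuant_of_le {b : ℕ} (h : N ≤ b) : continuant M N b = 1 := by
  rw [continuant, if_neg (not_lt.2 h)]

lemma continuant_pos (M : ℕ → ℕ) (N b : ℕ) : 0 < continuant M N b := by
  rw [continuant]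
  split_ifs
  · have := continuant_pos M N (b + 2)
    positivity
  · exact one_pos
termination_by N - b

lemma xcf_eq_one_div {b : ℕ} (h : b < N) : xcf M N b = 1 / (M b + xcf M N (b + 1)) := by
  rw [xcf, show N - b = N - (b + 1) + 1 by omega, List.range_succ_eq_map]
  simp [cf, xcf, Function.comp_def, add_assoc, add_comm 1]

lemma xcf_eq_continuant_div {b : ℕ} (hb : b ≤ N) :
    xcf M N b = continuant M N (b + 1) / continuant M N b := by
  rcases hb.lt_or_eq with h | rfl
  · have h₁ := continuant_pos M N (b + 1)
    have h₂ := continuant_pos M N (b + 2)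
    rw [xcf_eq_one_div h, xcf_eq_continuant_div (b := b + 1) h, continuant_of_lt h]
    push_cast
    field_simp
  · simp [xcf, cf, continuant_of_le]
termination_by N - b

end Continuant

section Blocks

variable {M : ℕ → ℕ} {N : ℕ}

lemma Ssum_succ (M : ℕ → ℕ) (b : ℕ) : Ssum M (b + 1) = Ssum M b + M b :=
  sum_range_succ M b

lemma Ssum_monotone (M : ℕ → ℕ) : Monotone (Ssum M) := fun _ _ h =>
  sum_le_sum_of_subset (range_subset_range.2 h)

lemma le_blk_iff {j : ℕ} (hj : j ≤ N) (k : ℕ) : j ≤ blk M N k ↔ Ssum M j ≤ k := by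
  constructor
  · intro h
    by_contra! hk
    have hsub : (range N).filter (fun m => Ssum M (m + 1) ≤ k) ⊆ range (j - 1) := fun m hm => by
      have := (Ssum_monotone M).reflect_lt ((mem_filter.1 hm).2.trans_lt hk)
      exact mem_range.2 (by omega)
    have hj0 : j ≠ 0 := by rintro rfl; simp [Ssum] at hk
    have := card_le_card hsub
    rw [card_range] at this
    exact absurd h (by unfold blk; omega)
  · intro h
    have hsub : range j ⊆ (range N).filter (fun m => Ssum M (m + 1) ≤ k) := fun m hm => by
      rw [mem_range] at hm
      exact mem_filter.2
        ⟨mem_range.2 (by omega), (Ssum_monotone M (by omega : m + 1 ≤ j)).trans h⟩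
    simpa [blk] using card_le_card hsub

lemma blk_eq_of_mem {b k : ℕ} (hb : b < N) (h₁ : Ssum M b ≤ k) (h₂ : k < Ssum M (b + 1)) :
    blk M N k = b :=
  le_antisymm (not_lt.1 fun h => h₂.not_ge ((le_blk_iff hb k).1 h)) ((le_blk_iff hb.le k).2 h₁)

lemma avert_eq_neg_one_pow {K : ℕ} (k : Fin K) : avert M N k = (-1) ^ blk M N k := by
  unfold avert
  split_ifs with h
  · rw [Even.neg_one_pow (Nat.even_iff.2 h)]
  · rw [Odd.neg_one_pow (Nat.odd_iff.2 (by omega))]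

end Blocks

section AlternatingSubsets

variable {K : ℕ}

def Alternates (a : Fin K → ℤ) (s : ℤ) (T : Finset (Fin K)) : Prop :=
  ∀ k ∈ T, s * (-1) ^ #(T.filter (· < k)) = a k

lemma alternates_insert_iff {a : Fin K → ℤ} {s : ℤ} {p : Fin K} {T : Finset (Fin K)}
    (hT : ∀ k ∈ T, p < k) :
    Alternates a s (insert p T) ↔ a p = s ∧ Alternates a (-s) T := by
  have hp : (insert p T).filter (· < p) = ∅ :=
    filter_eq_empty_iff.2 fun k hk => (mem_insert.1 hk).elim (fun h => h ▸ lt_irrefl p)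
      fun hk => (hT k hk).not_gt
  have hpT : p ∉ T := fun h => lt_irrefl p (hT p h)
  have hcard : ∀ k ∈ T, #((insert p T).filter (· < k)) = #(T.filter (· < k)) + 1 :=
    fun k hk => by
      rw [filter_insert, if_pos (hT k hk), card_insert_of_notMem (fun h => hpT (mem_filter.1 h).1)]
  simp only [Alternates, forall_mem_insert, hp, card_empty, pow_zero, mul_one]
  refine and_congr eq_comm (forall₂_congr fun k hk => ?_)
  rw [hcard k hk, pow_succ, mul_neg_one, mul_neg, neg_mul]

def altCount (a : Fin K → ℤ) (c : ℕ) (s : ℤ) : ℕ :=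
  #((univ.filter fun k : Fin K => c ≤ (k : ℕ)).powerset.filter (Alternates a s))

variable {a : Fin K → ℤ}

lemma altCount_of_le {c : ℕ} (hc : K ≤ c) (s : ℤ) : altCount a c s = 1 := by
  have : univ.filter (fun k : Fin K => c ≤ (k : ℕ)) = ∅ :=
    filter_eq_empty_iff.2 fun k _ => by omega
  simp [altCount, this, filter_singleton, Alternates]

lemma altCount_eq_add {c : ℕ} (hc : c < K) (s : ℤ) :
    altCount a c s =
      altCount a (c + 1) s + if a ⟨c, hc⟩ = s then altCount a (c + 1) (-s) else 0 := by
  set p : Fin K := ⟨c, hc⟩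
  set S := univ.filter fun k : Fin K => c + 1 ≤ (k : ℕ)
  have hS : univ.filter (fun k : Fin K => c ≤ (k : ℕ)) = insert p S := by
    ext k
    simp only [mem_filter, mem_univ, true_and, mem_insert, S, p, Fin.ext_iff]
    omega
  have hpS : p ∉ S := by simp [S, p]
  have hlt : ∀ T ∈ S.powerset, ∀ k ∈ T, p < k := fun T hT k hk => by
    have := mem_filter.1 (mem_powerset.1 hT hk)
    exact Fin.lt_def.2 this.2
  rw [altCount, hS, powerset_insert, filter_union, card_union_of_disjoint, filter_image,
    card_image_of_injOn]
  · congr 1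
    split_ifs with h
    · exact congrArg card
        (filter_congr fun T hT => by rw [alternates_insert_iff (hlt T hT), h]; simp)
    · exact card_eq_zero.2 (filter_eq_empty_iff.2 fun T hT h' =>
        h ((alternates_insert_iff (hlt T hT)).1 h').1)
  · intro T₁ h₁ T₂ h₂ h
    have hp : ∀ T ∈ S.powerset.filter fun T => Alternates a s (insert p T), p ∉ T :=
      fun T hT hpT => hpS (mem_powerset.1 (mem_filter.1 hT).1 hpT)
    rw [← erase_insert (hp T₁ h₁), ← erase_insert (hp T₂ h₂)]
    exact congrArg (·.erase p) h
  · refine disjoint_left.2 fun T h₁ h₂ => ?_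
    obtain ⟨U, -, rfl⟩ := mem_image.1 (mem_filter.1 h₂).1
    exact hpS (mem_powerset.1 (mem_filter.1 h₁).1 (mem_insert_self p U))

lemma altCount_block {σ : ℤ} (hσ : σ ≠ 0) {c m : ℕ} (hcm : c + m ≤ K)
    (ha : ∀ k : Fin K, c ≤ (k : ℕ) → (k : ℕ) < c + m → a k = σ) :
    altCount a c σ = m * altCount a (c + m) (-σ) + altCount a (c + m) σ ∧
      altCount a c (-σ) = altCount a (c + m) (-σ) := by
  induction m generalizing c with
  | zero => simp
  | succ m ih =>
    have hc : c < K := by omega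
    have hac : a ⟨c, hc⟩ = σ := ha _ le_rfl (by simp)
    obtain ⟨ih₁, ih₂⟩ :=
      ih (c := c + 1) (by omega) fun k h₁ h₂ => ha k (by omega) (by omega)
    rw [show c + 1 + m = c + (m + 1) by omega] at ih₁ ih₂
    rw [altCount_eq_add hc, altCount_eq_add hc, if_pos hac, if_neg (by omega), ih₁, ih₂]
    constructor <;> ring

end AlternatingSubsets

section BlockVertex

variable {K N : ℕ} {M : ℕ → ℕ}

lemma altCount_avert (hK : Ssum M N = K) {b : ℕ} (hb : b ≤ N) :
    altCount (avert M N : Fin K → ℤ) (Ssum M b) ((-1) ^ b) = continuant M N b ∧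
      altCount (avert M N : Fin K → ℤ) (Ssum M b) (-(-1) ^ b) = continuant M N (b + 1) := by
  induction hb using Nat.decreasingInduction with
  | self =>
    rw [hK, altCount_of_le le_rfl, altCount_of_le le_rfl, continuant_of_le le_rfl,
      continuant_of_le (by omega)]
    exact ⟨rfl, rfl⟩
  | of_succ b hb ih =>
    obtain ⟨ih₁, ih₂⟩ := ih
    rw [pow_succ, mul_neg_one] at ih₁ ih₂
    rw [neg_neg] at ih₂
    obtain ⟨h₁, h₂⟩ := altCount_block (a := (avert M N : Fin K → ℤ)) (σ := (-1) ^ b)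
      (pow_ne_zero _ (by norm_num)) (c := Ssum M b) (m := M b)
      (by rw [← Ssum_succ, ← hK]; exact Ssum_monotone M hb)
      fun k hk₁ hk₂ => by
        rw [avert_eq_neg_one_pow, blk_eq_of_mem hb hk₁ (Ssum_succ M b ▸ hk₂)]
    rw [← Ssum_succ] at h₁ h₂
    rw [h₁, h₂, ih₁, ih₂, continuant_of_lt hb]
    exact ⟨rfl, rfl⟩

lemma altCount_avert_add (hK : Ssum M N = K) {b : ℕ} (hb : b ≤ N) :
    altCount (avert M N : Fin K → ℤ) (Ssum M b) 1 +
        altCount (avert M N : Fin K → ℤ) (Ssum M b) (-1) =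
      continuant M N b + continuant M N (b + 1) := by
  obtain ⟨h₁, h₂⟩ := altCount_avert hK hb
  rcases neg_one_pow_eq_or ℤ b with h | h <;> rw [h] at h₁ h₂
  · rw [h₁, h₂]
  · rw [neg_neg] at h₂
    rw [h₁, h₂, add_comm]

end BlockVertex

section SampleSpace

variable {K : ℕ}

/-- The positions `k` with `α_k = 1`. -/
def alphaSet (ω : Omega K) : Finset (Fin K) := univ.filter fun k => ω.2.1 k = 0

variable {ω : Omega K} {k : Fin K}

lemma mem_alphaSet : k ∈ alphaSet ω ↔ ω.2.1 k = 0 := by simp [alphaSet]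

lemma gammaRV_eq (k : Fin K) (ω : Omega K) :
    gammaRV k ω = epsRV ω * (-1) ^ #((alphaSet ω).filter (· < k)) := by
  have : ∑ i ∈ univ.filter (fun i : Fin K => (i : ℕ) < k), alphaN i ω =
      #((alphaSet ω).filter (· < k)) := by
    simp only [alphaN, sum_boole, Nat.cast_id, alphaSet, filter_filter, Fin.lt_def, and_comm]
  rw [gammaRV, this]

lemma gammaRV_ne_zero (j : ℕ) (ω : Omega K) : gammaRV j ω ≠ 0 := by
  have : epsRV ω ≠ 0 := by unfold epsRV sgn; split <;> norm_num
  exact mul_ne_zero this (pow_ne_zero _ (by norm_num))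

lemma ARV_of_mem (hk : k ∈ alphaSet ω) :
    ARV k ω = epsRV ω * (-1) ^ #((alphaSet ω).filter (· < k)) := by
  rw [mem_alphaSet] at hk
  simp [ARV, alphaRV, hk, gammaRV_eq]

lemma ARV_of_notMem (hk : k ∉ alphaSet ω) : ARV k ω = betaRV k ω := by
  rw [mem_alphaSet] at hk
  simp [ARV, alphaRV, hk]

lemma BRV_ne_ARV_iff : BRV k ω ≠ ARV k ω ↔ k ∈ alphaSet ω := by
  rw [mem_alphaSet]
  by_cases hk : ω.2.1 k = 0
  · have := gammaRV_ne_zero k ω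
    simp only [BRV, ARV, alphaRV, hk, if_true, sub_self, zero_mul, one_mul, zero_sub, zero_add,
      iff_true]
    omega
  · simp [BRV, ARV, alphaRV, hk]

lemma forall_ARV_eq_iff (a : Fin K → ℤ) : (∀ k, ARV k ω = a k) ↔
    Alternates a (epsRV ω) (alphaSet ω) ∧ ∀ k ∉ alphaSet ω, betaRV k ω = a k := by
  refine ⟨fun h => ⟨fun k hk => (ARV_of_mem hk).symm.trans (h k),
    fun k hk => (ARV_of_notMem hk).symm.trans (h k)⟩, fun ⟨h₁, h₂⟩ k => ?_⟩
  by_cases hk : k ∈ alphaSet ω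
  · rw [ARV_of_mem hk, h₁ k hk]
  · rw [ARV_of_notMem hk, h₂ k hk]

variable {M : ℕ → ℕ} {N : ℕ}

lemma epsChange_iff {i : ℕ} : epsChange M N i ω ↔ ∃ k ∈ alphaSet ω, blk M N k = i := by
  simp only [epsChange, BRV_ne_ARV_iff, and_comm]

lemma forall_not_epsChange_iff {j : ℕ} (hj : j ≤ N) :
    (∀ i < j, ¬ epsChange M N i ω) ↔ ∀ k ∈ alphaSet ω, Ssum M j ≤ k := by
  simp only [epsChange_iff, ← le_blk_iff hj]
  refine ⟨fun h k hk => ?_, ?_⟩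
  · by_contra! hlt
    exact h _ hlt ⟨k, hk, rfl⟩
  · rintro h i hi ⟨k, hk, rfl⟩
    exact absurd (h k hk) (not_le.2 hi)

end SampleSpace

section Counting

variable {K : ℕ}

lemma card_filter_zeros_eq (T : Finset (Fin K)) :
    #(univ.filter fun α : Fin K → Fin 3 => univ.filter (α · = 0) = T) = 2 ^ #Tᶜ := by
  have : (univ.filter fun α : Fin K → Fin 3 => univ.filter (α · = 0) = T) =
      Fintype.piFinset fun k => if k ∈ T then {0} else {0}ᶜ := by
    ext α
    simp only [mem_filter, mem_univ, true_and, Fintype.mem_piFinset, Finset.ext_iff]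
    refine forall_congr' fun k => ?_
    split_ifs with hk <;> simp [hk]
  rw [this, Fintype.card_piFinset]
  simp [apply_ite card, prod_ite, card_compl, filter_not, card_univ_sdiff]

lemma card_filter_eqOn_compl (T : Finset (Fin K)) (b : Fin K → Bool) :
    #(univ.filter fun β : Fin K → Bool => ∀ k ∉ T, β k = b k) = 2 ^ #T := by
  have : (univ.filter fun β : Fin K → Bool => ∀ k ∉ T, β k = b k) =
      Fintype.piFinset fun k => if k ∈ T then univ else {b k} := by
    ext β
    simp only [mem_filter, mem_univ, true_and, Fintype.mem_piFinset]
    refine forall_congr' fun k => ?_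
    split_ifs with hk <;> simp [hk]
  rw [this, Fintype.card_piFinset]
  simp [apply_ite card]

lemma card_filter_epsRV_alphaSet (P : ℤ → Finset (Fin K) → Prop) {a : Fin K → ℤ}
    (ha : ∀ k, a k = 1 ∨ a k = -1) :
    #(univ.filter fun ω : Omega K =>
        P (epsRV ω) (alphaSet ω) ∧ ∀ k ∉ alphaSet ω, betaRV k ω = a k) =
      (#(univ.filter (P 1)) + #(univ.filter (P (-1)))) * 2 ^ K := by
  set b : Fin K → Bool := fun k => decide (a k = 1)
  have hb : ∀ (β : Bool) k, sgn β = a k ↔ β = b k := fun β k => by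
    rcases ha k with h | h <;> cases β <;> simp [sgn, b, h]
  set t := univ.filter fun p : Bool × Finset (Fin K) => P (sgn p.1) p.2
  rw [card_eq_sum_card_fiberwise (f := fun ω : Omega K => (ω.1, alphaSet ω)) (t := t)
    fun ω hω => by simpa [t, epsRV] using (mem_filter.1 hω).2.1]
  have hfiber : ∀ p ∈ t, #((univ.filter fun ω : Omega K =>
        P (epsRV ω) (alphaSet ω) ∧ ∀ k ∉ alphaSet ω, betaRV k ω = a k).filter
          fun ω => (ω.1, alphaSet ω) = p) = 2 ^ K := by
    rintro ⟨ε, T⟩ hp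
    have : ((univ.filter fun ω : Omega K =>
        P (epsRV ω) (alphaSet ω) ∧ ∀ k ∉ alphaSet ω, betaRV k ω = a k).filter
          fun ω => (ω.1, alphaSet ω) = (ε, T)) = {ε} ×ˢ
        (univ.filter fun α : Fin K → Fin 3 => univ.filter (α · = 0) = T) ×ˢ
        (univ.filter fun β : Fin K → Bool => ∀ k ∉ T, β k = b k) := by
      ext ⟨e, α, β⟩
      simp only [t, mem_filter, mem_univ, true_and] at hp
      simp only [mem_filter, mem_univ, true_and, mem_product, mem_singleton, Prod.mk.injEq,
        alphaSet, epsRV, betaRV, hb]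
      constructor
      · rintro ⟨⟨-, h⟩, rfl, rfl⟩
        exact ⟨rfl, rfl, by simpa using h⟩
      · rintro ⟨rfl, rfl, h⟩
        exact ⟨⟨hp, by simpa using h⟩, rfl, rfl⟩
    rw [this, card_product, card_product, card_singleton, card_filter_zeros_eq,
      card_filter_eqOn_compl, one_mul, ← pow_add, card_compl_add_card, Fintype.card_fin]
  rw [sum_congr rfl hfiber, sum_const, smul_eq_mul, card_filter, Fintype.sum_prod_type,
    Fintype.sum_bool, ← card_filter, ← card_filter]
  rfl

end Counting

section Events

def noChangeBefore {K : ℕ} (M : ℕ → ℕ) (N j : ℕ) : Finset (Omega K) :=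
  univ.filter fun ω => (∀ k, ARV k ω = avert M N k) ∧ ∀ i < j, ¬ epsChange M N i ω

variable {K N : ℕ} {M : ℕ → ℕ}

lemma card_noChangeBefore (hK : Ssum M N = K) {j : ℕ} (hj : j ≤ N) :
    #(noChangeBefore M N j : Finset (Omega K)) =
      (continuant M N j + continuant M N (j + 1)) * 2 ^ K := by
  set X := univ.filter fun k : Fin K => Ssum M j ≤ (k : ℕ)
  have : (noChangeBefore M N j : Finset (Omega K)) = univ.filter fun ω : Omega K =>
      (alphaSet ω ∈ X.powerset ∧ Alternates (avert M N) (epsRV ω) (alphaSet ω)) ∧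
        ∀ k ∉ alphaSet ω, betaRV k ω = avert M N k := by
    ext ω
    simp only [noChangeBefore, mem_filter, mem_univ, true_and, forall_ARV_eq_iff,
      forall_not_epsChange_iff hj, mem_powerset, subset_iff, X]
    tauto
  have havert (k : Fin K) : avert M N k = 1 ∨ avert M N k = -1 := by
    unfold avert
    split_ifs <;> simp
  rw [this, ← altCount_avert_add hK hj]
  convert card_filter_epsRV_alphaSet
    (fun s T => T ∈ X.powerset ∧ Alternates (avert M N) s T) havert using 4 <;>
    simp only [altCount, ← filter_filter, filter_mem_eq_inter, univ_inter, X]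

lemma filter_not_epsChange_noChangeBefore (j : ℕ) :
    (noChangeBefore M N j : Finset (Omega K)).filter (¬ epsChange M N j ·) =
      noChangeBefore M N (j + 1) := by
  ext ω
  simp only [noChangeBefore, mem_filter, mem_univ, true_and, Nat.lt_succ_iff_lt_or_eq,
    or_imp, forall_and, forall_eq, and_assoc]

lemma card_filter_epsChange_noChangeBefore (hK : Ssum M N = K) {j : ℕ} (hj : j < N) :
    #((noChangeBefore M N j : Finset (Omega K)).filter (epsChange M N j)) =
      M j * continuant M N (j + 1) * 2 ^ K := by
  have h := card_filter_add_card_filter_not (s := (noChangeBefore M N j : Finset (Omega K)))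
    (epsChange M N j)
  rw [filter_not_epsChange_noChangeBefore, card_noChangeBefore hK hj.le,
    card_noChangeBefore hK hj, continuant_of_lt hj] at h
  linarith

end Events

lemma transition_prob_eq_continuant_ratio {M : ℕ → ℕ} {N j : ℕ} (hj : j < N) :
    (M j : ℝ) / (M j + 1 + xcf M N (j + 1)) =
      (M j * continuant M N (j + 1) : ℕ) / (continuant M N j + continuant M N (j + 1) : ℕ) := by
  have h₁ := continuant_pos M N (j + 1)
  have h₂ := continuant_pos M N (j + 2)
  rw [xcf_eq_continuant_div hj, continuant_of_lt hj]
  push_cast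
  field_simp
  ring

/-- Blocks are 0-indexed: `xcf M N (j + 1)` is the paper's `x_{n+1}^N` for `n = j + 1`, and it
equals `1` when `j = N - 1`. -/
theorem stmt17_general (K N : ℕ) (M : ℕ → ℕ)
    (hK : ∑ m ∈ Finset.range N, M m = K)
    (j : ℕ) (hjN : j < N) :
    ProbabilityTheory.cond (unif K)
        ({ω | ∀ k : Fin K, ARV k ω = avert M N k} ∩
          {ω | ∀ i : ℕ, i < j → ¬ epsChange M N i ω})
        {ω | epsChange M N j ω} =
      ENNReal.ofReal ((M j : ℝ) / ((M j : ℝ) + 1 + xcf M N (j + 1))) := by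
  have hE : {ω : Omega K | ∀ k, ARV k ω = avert M N k} ∩
      {ω | ∀ i < j, ¬ epsChange M N i ω} = ↑(noChangeBefore M N j : Finset (Omega K)) := by
    ext ω
    simp [noChangeBefore]
  have hG : 0 < continuant M N j + continuant M N (j + 1) :=
    add_pos (continuant_pos M N j) (continuant_pos M N (j + 1))
  rw [hE, ← coe_filter_univ, unif, cond_uniformOfFintype_toMeasure, inter_filter, inter_univ,
    card_filter_epsChange_noChangeBefore hK hjN, card_noChangeBefore hK hjN.le,
    transition_prob_eq_continuant_ratio hjN, ENNReal.ofReal_div_of_pos (Nat.cast_pos.2 hG),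
    ENNReal.ofReal_natCast, ENNReal.ofReal_natCast]
  push_cast
  exact ENNReal.mul_div_mul_right _ _ (by positivity) (by simp)

/-- Subsequent phase with no prior change (Theorem 1): conditionally on `Y(0) = a` and
`ε_i = 0` for all blocks `i < j`, the probability of a change in block `j` is
`M_j/(M_j + 1 + x_{j+1}^N)` (0-indexed; `xcf M N (j+1)` is the continued fraction
`x_{j+1}^N`, equal to `1` when `j = N - 1`, giving `M_j/(M_j+2)`). -/
theorem stmt17 (K N : ℕ) (M : ℕ → ℕ) (hM : ∀ m < N, 0 < M m)
    (hK : ∑ m ∈ Finset.range N, M m = K)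
    (j : ℕ) (hj : 1 ≤ j) (hjN : j < N) :
    ProbabilityTheory.cond (unif K)
        ({ω | ∀ k : Fin K, ARV k ω = avert M N k} ∩
          {ω | ∀ i : ℕ, i < j → ¬ epsChange M N i ω})
        {ω | epsChange M N j ω} =
      ENNReal.ofReal ((M j : ℝ) / ((M j : ℝ) + 1 + xcf M N (j + 1))) :=
  stmt17_general K N M hK j hjN
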